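/- Let X = C(M, ℂ^d) with the polyproduct ⊛ and define the operator norm ‖f‖ = sup_{|g|_∞ ≤ 1} |f ⊛ g|_∞. Then ‖·‖ is equivalent to |·|_∞: there is C > 0 with |f|_∞ ≤ ‖f‖ ≤ C |f|_∞ for all f ∈ X, and ‖·‖ is submultiplicative: ‖f ⊛ g‖ ≤ ‖f‖ ‖g‖. -/

import Mathlib

open Polynomial Finset

/-- `σ_{jl} = 1/(p'(λ_l)(λ_j - λ_l))` where `p = ∏ (X - λ_i)`. -/
noncomputable def sigma {d : ℕ} (lam : Fin d → ℂ) (j l : Fin d) : ℂ :=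
  1 / ((Polynomial.derivative (∏ i, (X - C (lam i)))).eval (lam l) * (lam j - lam l))

/-- The polyproduct `f ⊛ g` of `ℂ^d`-valued functions on `M`, componentwise. -/
noncomputable def polyprod {d : ℕ} (lam : Fin d → ℂ) {M : Set ℂ}
    (f g : M → Fin d → ℂ) (w : M) (j : Fin d) : ℂ :=
  f w j * g w j -
    (w : ℂ) * ∑ l ∈ Finset.univ.erase j,
      sigma lam j l * (f w j - f w l) * (g w j - g w l)

/-- The sup-max norm `|h|_∞` of an arbitrary `ℂ^d`-valued function on `M`. -/
noncomputable def supNorm {d : ℕ} {M : Set ℂ} (h : M → Fin d → ℂ) : ℝ :=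
  ⨆ w : M, ‖h w‖

/-- The operator norm `‖h‖ = sup_{|g|_∞ ≤ 1} |h ⊛ g|_∞`, the supremum being taken
over continuous `g`. -/
noncomputable def opNorm {d : ℕ} (lam : Fin d → ℂ) {M : Set ℂ} [CompactSpace M]
    (h : M → Fin d → ℂ) : ℝ :=
  ⨆ g : {g : C(M, Fin d → ℂ) // ‖g‖ ≤ 1}, supNorm (polyprod lam h ⇑(g : C(M, Fin d → ℂ)))


namespace PP

variable {d : ℕ} (lam : Fin d → ℂ)

noncomputable def P : ℂ[X] := ∏ i, (X - C (lam i))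

lemma P_monic : (P lam).Monic :=
  monic_prod_of_monic _ _ fun i _ => monic_X_sub_C (lam i)

lemma P_natDegree : (P lam).natDegree = d := by
  rw [P, natDegree_prod]
  · simp
  · intro i _; exact X_sub_C_ne_zero (lam i)

lemma P_degree : (P lam).degree = d := by
  rw [degree_eq_natDegree (P_monic lam).ne_zero, P_natDegree]

lemma P_eval_root (j : Fin d) : (P lam).eval (lam j) = 0 := by
  rw [P, eval_prod]
  exact Finset.prod_eq_zero (mem_univ j) (by simp)

lemma deriv_eval (l : Fin d) :
    (derivative (P lam)).eval (lam l) = ∏ i ∈ univ.erase l, (lam l - lam i) := by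
  have h : P lam = (X - C (lam l)) * ∏ i ∈ univ.erase l, (X - C (lam i)) :=
    (mul_prod_erase univ _ (mem_univ l)).symm
  rw [h, derivative_mul, derivative_X_sub_C]
  simp [eval_prod]

lemma deriv_eval_ne (hinj : Function.Injective lam) (l : Fin d) :
    (derivative (P lam)).eval (lam l) ≠ 0 := by
  rw [deriv_eval]
  exact Finset.prod_ne_zero_iff.2 fun i hi => sub_ne_zero.2 fun h => (mem_erase.1 hi).1 (hinj h.symm)


lemma basis_coeff (l : Fin d) :
    (Lagrange.basis univ lam l).coeff (d - 1) = (∏ i ∈ univ.erase l, (lam l - lam i))⁻¹ := by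
  rw [Lagrange.basis]
  have : ∀ j ∈ univ.erase l, Lagrange.basisDivisor (lam l) (lam j)
      = C (lam l - lam j)⁻¹ * (X - C (lam j)) := fun j _ => rfl
  rw [Finset.prod_congr rfl this, Finset.prod_mul_distrib, ← map_prod, coeff_C_mul]
  have hQ : (∏ j ∈ univ.erase l, (X - C (lam j))).Monic :=
    monic_prod_of_monic _ _ fun i _ => monic_X_sub_C _
  have hdeg : (∏ j ∈ univ.erase l, (X - C (lam j))).natDegree = d - 1 := by
    rw [natDegree_prod _ _ fun i _ => X_sub_C_ne_zero _]
    simp [Finset.card_erase_of_mem]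
  rw [← hdeg, hQ.coeff_natDegree, mul_one, ← Finset.prod_inv_distrib]

lemma coeff_eq_sum (hinj : Function.Injective lam) {R : ℂ[X]} (hR : R.degree < d) :
    R.coeff (d - 1) = ∑ l, R.eval (lam l) * (∏ i ∈ univ.erase l, (lam l - lam i))⁻¹ := by
  have hvs : Set.InjOn lam ↑(univ : Finset (Fin d)) := hinj.injOn
  have hcard : ((univ : Finset (Fin d)).card : WithBot ℕ) = d := by simp
  have h := Lagrange.eq_interpolate (f := R) hvs (by rwa [hcard])
  conv_lhs => rw [h]
  rw [Lagrange.interpolate_apply, finset_sum_coeff]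
  exact Finset.sum_congr rfl fun l _ => by rw [coeff_C_mul, basis_coeff]

lemma key_div (hd : 0 < d) (G : ℂ[X]) (c : ℂ) :
    (((X - C c) * G) /ₘ (P lam)).eval c = (G %ₘ (P lam)).coeff (d - 1) := by
  set S := G /ₘ (P lam) with hS
  set R := G %ₘ (P lam) with hR
  set ρ := R.coeff (d - 1) with hρ
  have hG : R + P lam * S = G := modByMonic_add_div G (P lam)
  have hRdeg : R.degree < (d : WithBot ℕ) := by
    rw [← P_degree lam]; exact degree_modByMonic_lt G (P_monic lam)
  have hRc : ∀ m : ℕ, d ≤ m → R.coeff m = 0 := fun m hm =>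
    coeff_eq_zero_of_degree_lt (lt_of_lt_of_le hRdeg (by exact_mod_cast hm))
  have hrdeg : ((X - C c) * R - C ρ * P lam).degree < (P lam).degree := by
    rw [P_degree, degree_lt_iff_coeff_zero]
    intro m hm
    have hm' : d ≤ m := by exact_mod_cast hm
    obtain ⟨k, rfl⟩ : ∃ k, m = k + 1 :=
      ⟨m - 1, (Nat.succ_pred_eq_of_pos (lt_of_lt_of_le hd hm')).symm⟩
    have h1 : ((X - C c) * R).coeff (k + 1) = R.coeff k - c * R.coeff (k + 1) := by
      rw [sub_mul, coeff_sub, coeff_X_mul, coeff_C_mul]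
    rw [coeff_sub, h1, coeff_C_mul]
    rcases eq_or_lt_of_le hm' with h | h
    · have hP1 : (P lam).coeff (k + 1) = 1 := by
        rw [← h]
        have h2 := (P_monic lam).coeff_natDegree
        rwa [P_natDegree] at h2
      have hk : k = d - 1 := by omega
      rw [hP1, hRc (k+1) hm', hk, ← hρ]
      ring
    · have h1' : (P lam).coeff (k + 1) = 0 := by
        apply coeff_eq_zero_of_natDegree_lt; rw [P_natDegree]; exact h
      rw [h1', hRc (k+1) hm', hRc k (by omega)]
      ring
  have huniq := div_modByMonic_unique (f := (X - C c) * G) (g := P lam)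
      ((X - C c) * S + C ρ) ((X - C c) * R - C ρ * P lam) (P_monic lam)
      ⟨by rw [← hG]; ring, hrdeg⟩
  rw [huniq.1]
  simp

noncomputable def itp (a : Fin d → ℂ) : ℂ[X] := Lagrange.interpolate univ lam a

lemma itp_eval (hinj : Function.Injective lam) (a : Fin d → ℂ) (j : Fin d) :
    (itp lam a).eval (lam j) = a j :=
  Lagrange.eval_interpolate_at_node a hinj.injOn (mem_univ j)

lemma itp_degree (hinj : Function.Injective lam) (a : Fin d → ℂ) :
    (itp lam a).degree < (d : WithBot ℕ) := by
  have h := Lagrange.degree_interpolate_lt (s := univ) (v := lam) a hinj.injOn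
  rw [Finset.card_univ, Fintype.card_fin] at h
  exact h

lemma aux_deg (hd : 0 < d) {A : ℂ[X]} (hA : A.degree < (d : WithBot ℕ)) (c k : ℂ) :
    degree ((X - C c) * (C k * (A /ₘ (X - C c)))) < (d : WithBot ℕ) := by
  set A1 := A /ₘ (X - C c) with hA1
  rcases eq_or_ne (C k * A1) 0 with h | h
  · rw [h, mul_zero, degree_zero]; exact WithBot.bot_lt_coe d
  · have hA1ne : A1 ≠ 0 := fun h0 => h (by rw [h0, mul_zero])
    have hAne : A ≠ 0 := by rintro rfl; rw [hA1, zero_divByMonic] at hA1ne; exact hA1ne rfl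
    have h1 : degree A1 < degree A :=
      degree_divByMonic_lt A (X - C c) hAne (by rw [degree_X_sub_C]; exact zero_lt_one)
    have h2 : degree ((X - C c) * (C k * A1)) ≤ 1 + degree A1 := by
      rw [degree_mul, degree_X_sub_C, degree_mul]
      have := add_le_add_right (degree_C_le (a := k)) (degree A1)
      rw [add_zero, add_comm] at this
      exact add_le_add_right this 1
    refine lt_of_le_of_lt h2 ?_
    rw [degree_eq_natDegree hA1ne] at h1 ⊢
    rw [degree_eq_natDegree hAne] at h1 hA
    have hnm : A1.natDegree < A.natDegree := by exact_mod_cast h1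
    have hmd : A.natDegree < d := by exact_mod_cast hA
    have : ((A1.natDegree + 1 : ℕ) : WithBot ℕ) < ((d : ℕ) : WithBot ℕ) := by
      exact_mod_cast Nat.lt_of_le_of_lt (Nat.succ_le_of_lt hnm) hmd
    simpa [add_comm] using this

lemma divByMonic_add_right (f E : ℂ[X]) (hE : E.degree < (P lam).degree) :
    (f + E) /ₘ (P lam) = f /ₘ (P lam) := by
  have h := div_modByMonic_unique (f := f + E) (g := P lam) (f /ₘ (P lam)) (f %ₘ (P lam) + E)
    (P_monic lam) ⟨by rw [add_comm (f %ₘ (P lam)) E, add_assoc, modByMonic_add_div f (P lam), add_comm], lt_of_le_of_lt (degree_add_le _ _) (max_lt (degree_modByMonic_lt f (P_monic lam)) hE)⟩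
  exact h.1

theorem sum_sigma (hinj : Function.Injective lam) (a b : Fin d → ℂ) (j : Fin d) :
    ∑ l ∈ univ.erase j, sigma lam j l * (a j - a l) * (b j - b l)
      = -(((itp lam a * itp lam b) /ₘ (P lam)).eval (lam j)) := by
  have hd : 0 < d := j.pos
  set c := lam j with hc
  set A := itp lam a with hA
  set B := itp lam b with hB
  set A1 := A /ₘ (X - C c) with hA1
  set B1 := B /ₘ (X - C c) with hB1
  have hAsplit : A = (X - C c) * A1 + C (a j) := by
    conv_lhs => rw [← modByMonic_add_div A (X - C c)]
    rw [modByMonic_X_sub_C_eq_C_eval, itp_eval lam hinj, add_comm]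
  have hBsplit : B = (X - C c) * B1 + C (b j) := by
    conv_lhs => rw [← modByMonic_add_div B (X - C c)]
    rw [modByMonic_X_sub_C_eq_C_eval, itp_eval lam hinj, add_comm]
  have hvA : ∀ l, a j - a l = (c - lam l) * A1.eval (lam l) := by
    intro l
    have : a l = A.eval (lam l) := (itp_eval lam hinj a l).symm
    rw [this, hAsplit]; simp; ring
  have hvB : ∀ l, b j - b l = (c - lam l) * B1.eval (lam l) := by
    intro l
    have : b l = B.eval (lam l) := (itp_eval lam hinj b l).symm
    rw [this, hBsplit]; simp; ring
  set G := (X - C c) * (A1 * B1) with hG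
  have hDsig : ∀ l, sigma lam j l
      = 1 / ((derivative (P lam)).eval (lam l) * (lam j - lam l)) := fun l => rfl
  -- each term equals -(G.eval (lam l)) * D_l⁻¹
  have hterm : ∀ l ∈ univ.erase j, sigma lam j l * (a j - a l) * (b j - b l)
      = -(G.eval (lam l) * ((derivative (P lam)).eval (lam l))⁻¹) := by
    intro l hl
    have hlj : lam j - lam l ≠ 0 :=
      sub_ne_zero.2 fun h => (mem_erase.1 hl).1 (hinj h).symm
    have hDne := deriv_eval_ne lam hinj l
    rw [hDsig, hvA, hvB, hG]
    simp only [eval_mul, eval_sub, eval_X, eval_C]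
    field_simp
    ring
  rw [Finset.sum_congr rfl hterm]
  have hGj : G.eval c = 0 := by rw [hG]; simp
  have hsum : ∑ l ∈ univ.erase j, -(G.eval (lam l) * ((derivative (P lam)).eval (lam l))⁻¹)
      = -∑ l, G.eval (lam l) * ((derivative (P lam)).eval (lam l))⁻¹ := by
    rw [← Finset.sum_neg_distrib]
    exact Finset.sum_erase _ (by rw [hGj, zero_mul, neg_zero])
  rw [hsum]
  have hmod : ∀ l, (G %ₘ (P lam)).eval (lam l) = G.eval (lam l) := by
    intro l
    conv_lhs => rw [modByMonic_eq_sub_mul_div G (P lam)]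
    simp [P_eval_root lam l]
  have hGdeg : (G %ₘ (P lam)).degree < (d : WithBot ℕ) := by
    rw [← P_degree lam]; exact degree_modByMonic_lt G (P_monic lam)
  have h2 : ∑ l, G.eval (lam l) * ((derivative (P lam)).eval (lam l))⁻¹
      = (G %ₘ (P lam)).coeff (d - 1) := by
    rw [coeff_eq_sum lam hinj hGdeg]
    exact Finset.sum_congr rfl fun l _ => by rw [hmod, deriv_eval]
  rw [h2, ← key_div lam hd G c]
  congr 2
  have hsplit : A * B = (X - C c) * G + ((X - C c) * (C (b j) * A1)
      + ((X - C c) * (C (a j) * B1) + C (a j) * C (b j))) := by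
    rw [hG]; nth_rewrite 1 [hAsplit, hBsplit]; ring
  rw [hsplit, divByMonic_add_right]
  rw [P_degree]
  refine lt_of_le_of_lt (degree_add_le _ _) (max_lt (aux_deg hd ?_ c (b j)) ?_)
  · exact itp_degree lam hinj a
  refine lt_of_le_of_lt (degree_add_le _ _) (max_lt (aux_deg hd ?_ c (a j)) ?_)
  · exact itp_degree lam hinj b
  · rw [← C_mul]
    exact lt_of_le_of_lt degree_C_le (by exact_mod_cast WithBot.coe_lt_coe.2 hd)

noncomputable def pmul (w : ℂ) (a b : Fin d → ℂ) : Fin d → ℂ := fun j =>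
  a j * b j - w * ∑ l ∈ univ.erase j, sigma lam j l * (a j - a l) * (b j - b l)

noncomputable def rep (w : ℂ) (a b : Fin d → ℂ) : ℂ[X] :=
  (itp lam a * itp lam b) %ₘ (P lam) + C w * ((itp lam a * itp lam b) /ₘ (P lam))

lemma natDeg_lt (hd : 0 < d) {A : ℂ[X]} (hA : A.degree < (d : WithBot ℕ)) :
    A.natDegree < d := by
  rcases eq_or_ne A 0 with rfl | h
  · simpa using hd
  · exact (natDegree_lt_iff_degree_lt h).2 (by exact_mod_cast hA)

lemma rep_degree (hinj : Function.Injective lam) (hd : 0 < d) (w : ℂ) (a b : Fin d → ℂ) :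
    (rep lam w a b).degree < (d : WithBot ℕ) := by
  have h1 : ((itp lam a * itp lam b) %ₘ (P lam)).degree < (d : WithBot ℕ) := by
    rw [← P_degree lam]; exact degree_modByMonic_lt _ (P_monic lam)
  have h2 : ((itp lam a * itp lam b) /ₘ (P lam)).natDegree < d := by
    rw [natDegree_divByMonic _ (P_monic lam), P_natDegree]
    have ha := natDeg_lt hd (itp_degree lam hinj a)
    have hb := natDeg_lt hd (itp_degree lam hinj b)
    have := natDegree_mul_le (p := itp lam a) (q := itp lam b)
    omega
  refine lt_of_le_of_lt (degree_add_le _ _) (max_lt h1 ?_)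
  refine lt_of_le_of_lt (degree_mul_le _ _) ?_
  refine lt_of_le_of_lt (add_le_add_left degree_C_le _) ?_
  rw [zero_add]
  exact lt_of_le_of_lt degree_le_natDegree (by exact_mod_cast h2)

lemma rep_eval (hinj : Function.Injective lam) (w : ℂ) (a b : Fin d → ℂ) (j : Fin d) :
    (rep lam w a b).eval (lam j) = pmul lam w a b j := by
  rw [rep, pmul, sum_sigma lam hinj]
  have : ((itp lam a * itp lam b) %ₘ (P lam)).eval (lam j)
      = a j * b j := by
    conv_lhs => rw [modByMonic_eq_sub_mul_div _ (P lam)]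
    simp [P_eval_root lam j, itp_eval lam hinj]
  simp only [eval_add, eval_mul, eval_C, this]
  ring

lemma itp_pmul (hinj : Function.Injective lam) (hd : 0 < d) (w : ℂ) (a b : Fin d → ℂ) :
    itp lam (pmul lam w a b) = rep lam w a b := by
  symm
  apply Lagrange.eq_interpolate_of_eval_eq (v := lam) (s := univ) (r := pmul lam w a b) hinj.injOn
    (by simpa using rep_degree lam hinj hd w a b)
    (fun i _ => rep_eval lam hinj w a b i)

lemma pmul_assoc (hinj : Function.Injective lam) (w : ℂ) (a b c : Fin d → ℂ) :
    pmul lam w (pmul lam w a b) c = pmul lam w a (pmul lam w b c) := by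
  rcases Nat.eq_zero_or_pos d with hd | hd
  · funext j; exact absurd (j.2.trans_eq hd) (Nat.not_lt_zero _)
  set I : Ideal ℂ[X] := Ideal.span {P lam - C w} with hI
  set Φ : (Fin d → ℂ) → ℂ[X] ⧸ I := fun x => Ideal.Quotient.mk I (itp lam x) with hΦ
  have hmul : ∀ x y, Φ (pmul lam w x y) = Φ x * Φ y := by
    intro x y
    rw [hΦ]
    simp only
    rw [← map_mul, Ideal.Quotient.eq, itp_pmul lam hinj hd, hI, Ideal.mem_span_singleton]
    refine ⟨-((itp lam x * itp lam y) /ₘ (P lam)), ?_⟩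
    rw [rep]
    conv_lhs => rw [modByMonic_eq_sub_mul_div _ (P lam)]
    ring
  have hinjΦ : ∀ x y, Φ x = Φ y → x = y := by
    intro x y hxy
    rw [hΦ] at hxy
    simp only [Ideal.Quotient.eq, hI, Ideal.mem_span_singleton] at hxy
    have hdeg : (itp lam x - itp lam y).degree < (P lam - C w).degree := by
      have : (P lam - C w).degree = (d : WithBot ℕ) := by
        rw [degree_sub_C, P_degree]
        rw [P_degree]; exact_mod_cast hd
      rw [this]
      exact lt_of_le_of_lt (degree_sub_le _ _)
        (max_lt (itp_degree lam hinj x) (itp_degree lam hinj y))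
    have h0 : itp lam x - itp lam y = 0 := eq_zero_of_dvd_of_degree_lt hxy hdeg
    funext j
    have := congrArg (fun q => Polynomial.eval (lam j) q) h0
    have h2 : (itp lam x).eval (lam j) = (itp lam y).eval (lam j) :=
      sub_eq_zero.1 (by simpa using this)
    rwa [itp_eval lam hinj, itp_eval lam hinj] at h2
  apply hinjΦ
  rw [hmul, hmul, hmul, hmul, mul_assoc]

lemma pmul_one (w : ℂ) (a : Fin d → ℂ) : pmul lam w a (fun _ => 1) = a := by
  funext j; simp [pmul]

lemma pmul_smul_right (w : ℂ) (s : ℝ) (a b : Fin d → ℂ) :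
    pmul lam w a (s • b) = s • pmul lam w a b := by
  funext j
  simp only [pmul, Pi.smul_apply, Complex.real_smul, Finset.mul_sum]
  have : ∀ l ∈ univ.erase j, w * (sigma lam j l * (a j - a l) * ((s:ℂ) * b j - (s:ℂ) * b l))
      = (s:ℂ) * (w * (sigma lam j l * (a j - a l) * (b j - b l))) := fun l _ => by ring
  rw [Finset.sum_congr rfl this, ← Finset.mul_sum, ← Finset.mul_sum]
  ring

lemma pmul_zero_right (w : ℂ) (a : Fin d → ℂ) : pmul lam w a 0 = 0 := by
  funext j; simp [pmul]


variable {M : Set ℂ}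

lemma polyprod_eq_pmul (f g : M → Fin d → ℂ) (w : M) :
    polyprod lam f g w = pmul lam (w : ℂ) (f w) (g w) := rfl

noncomputable def pmulC (f g : C(M, Fin d → ℂ)) : C(M, Fin d → ℂ) where
  toFun w := pmul lam (w : ℂ) (f w) (g w)
  continuous_toFun := by
    apply continuous_pi
    intro j
    simp only [pmul]
    apply Continuous.sub
    · exact ((continuous_apply j).comp f.continuous).mul
        ((continuous_apply j).comp g.continuous)
    · apply Continuous.mul continuous_subtype_val
      apply continuous_finset_sum
      intro l _
      exact (continuous_const.mul (((continuous_apply j).comp f.continuous).sub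
        ((continuous_apply l).comp f.continuous))).mul
        (((continuous_apply j).comp g.continuous).sub
          ((continuous_apply l).comp g.continuous))

lemma pmulC_coe (f g : C(M, Fin d → ℂ)) : ⇑(pmulC lam f g) = polyprod lam ⇑f ⇑g := rfl

noncomputable def Ssig : ℝ := ∑ j, ∑ l ∈ univ.erase j, ‖sigma lam j l‖

lemma Ssig_nonneg : 0 ≤ Ssig lam := by
  apply Finset.sum_nonneg
  intro j _
  exact Finset.sum_nonneg fun l _ => norm_nonneg _

lemma pmul_norm_bound {R : ℝ} (hR0 : 0 ≤ R) (w : ℂ) (hw : ‖w‖ ≤ R) (a b : Fin d → ℂ) :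
    ‖pmul lam w a b‖ ≤ (1 + 4 * R * Ssig lam) * ‖a‖ * ‖b‖ := by
  have hK : 0 ≤ (1 + 4 * R * Ssig lam) * ‖a‖ * ‖b‖ := by
    have := Ssig_nonneg lam
    positivity
  rw [pi_norm_le_iff_of_nonneg hK]
  intro j
  have ha := norm_nonneg a
  have hb := norm_nonneg b
  have hsig : ∑ l ∈ univ.erase j, ‖sigma lam j l‖ ≤ Ssig lam :=
    Finset.single_le_sum (f := fun j => ∑ l ∈ univ.erase j, ‖sigma lam j l‖)
      (fun i _ => Finset.sum_nonneg fun l _ => norm_nonneg _) (mem_univ j)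
  have hsum : ‖∑ l ∈ univ.erase j, sigma lam j l * (a j - a l) * (b j - b l)‖
      ≤ Ssig lam * (2 * ‖a‖) * (2 * ‖b‖) := by
    calc ‖∑ l ∈ univ.erase j, sigma lam j l * (a j - a l) * (b j - b l)‖
        ≤ ∑ l ∈ univ.erase j, ‖sigma lam j l‖ * (2 * ‖a‖) * (2 * ‖b‖) := by
          apply norm_sum_le_of_le
          intro l _
          rw [norm_mul, norm_mul]
          have hx : ‖a j - a l‖ ≤ 2 * ‖a‖ := by
            have := norm_sub_le (a j) (a l)
            have h1 := norm_le_pi_norm a j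
            have h2 := norm_le_pi_norm a l
            linarith
          have hy : ‖b j - b l‖ ≤ 2 * ‖b‖ := by
            have := norm_sub_le (b j) (b l)
            have h1 := norm_le_pi_norm b j
            have h2 := norm_le_pi_norm b l
            linarith
          gcongr
      _ = (∑ l ∈ univ.erase j, ‖sigma lam j l‖) * (2 * ‖a‖) * (2 * ‖b‖) := by
          rw [← Finset.sum_mul, ← Finset.sum_mul]
      _ ≤ Ssig lam * (2 * ‖a‖) * (2 * ‖b‖) := by gcongr
  have h1 : ‖a j‖ ≤ ‖a‖ := norm_le_pi_norm a j
  have h2 : ‖b j‖ ≤ ‖b‖ := norm_le_pi_norm b j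
  have hS := Ssig_nonneg lam
  calc ‖pmul lam w a b j‖
      ≤ ‖a j * b j‖ + ‖w * ∑ l ∈ univ.erase j, sigma lam j l * (a j - a l) * (b j - b l)‖ :=
        norm_sub_le _ _
    _ ≤ ‖a‖ * ‖b‖ + R * (Ssig lam * (2 * ‖a‖) * (2 * ‖b‖)) := by
        rw [norm_mul, norm_mul]
        have := mul_le_mul hw hsum (norm_nonneg _) hR0
        have h3 : ‖a j‖ * ‖b j‖ ≤ ‖a‖ * ‖b‖ :=
          mul_le_mul h1 h2 (norm_nonneg _) (norm_nonneg _)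
        linarith
    _ = (1 + 4 * R * Ssig lam) * ‖a‖ * ‖b‖ := by ring

lemma supNorm_coe [CompactSpace M] (F : C(M, Fin d → ℂ)) : supNorm ⇑F = ‖F‖ :=
  (ContinuousMap.norm_eq_iSup_norm F).symm

lemma opNorm_def [CompactSpace M] (h : M → Fin d → ℂ) :
    opNorm lam h = ⨆ g : {g : C(M, Fin d → ℂ) // ‖g‖ ≤ 1},
      supNorm (polyprod lam h ⇑(g : C(M, Fin d → ℂ))) := rfl

end PP

open PP

theorem stmt7 {d : ℕ} (lam : Fin d → ℂ) (hinj : Function.Injective lam)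
    (M : Set ℂ) (hM : IsCompact M) [CompactSpace M] :
    ∃ C : ℝ, 0 < C ∧
      (∀ f : C(M, Fin d → ℂ), ‖f‖ ≤ opNorm lam ⇑f ∧ opNorm lam ⇑f ≤ C * ‖f‖) ∧
      (∀ f g : C(M, Fin d → ℂ),
        opNorm lam (polyprod lam ⇑f ⇑g) ≤ opNorm lam ⇑f * opNorm lam ⇑g) := by
  haveI : Nonempty {g : C(M, Fin d → ℂ) // ‖g‖ ≤ 1} := ⟨⟨0, by simp⟩⟩
  obtain ⟨r, hr⟩ := hM.isBounded.subset_closedBall (0 : ℂ)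
  set R : ℝ := max r 0 with hRdef
  have hR0 : 0 ≤ R := le_max_right _ _
  have hw : ∀ w : M, ‖(w : ℂ)‖ ≤ R := by
    intro w
    have := hr w.2
    rw [Metric.mem_closedBall, dist_zero_right] at this
    exact le_trans this (le_max_left _ _)
  set K : ℝ := 1 + 4 * R * Ssig lam with hKdef
  have hSig := Ssig_nonneg lam
  have hK1 : (1 : ℝ) ≤ K := by rw [hKdef]; nlinarith
  have hK0 : 0 < K := lt_of_lt_of_le one_pos hK1
  have hFG : ∀ f g : C(M, Fin d → ℂ), ‖pmulC lam f g‖ ≤ K * ‖f‖ * ‖g‖ := by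
    intro f g
    have hC0 : 0 ≤ K * ‖f‖ * ‖g‖ := by positivity
    refine (ContinuousMap.norm_le _ hC0).2 fun w => ?_
    calc ‖pmulC lam f g w‖ = ‖pmul lam (w : ℂ) (f w) (g w)‖ := rfl
      _ ≤ K * ‖f w‖ * ‖g w‖ := pmul_norm_bound lam hR0 _ (hw w) _ _
      _ ≤ K * ‖f‖ * ‖g‖ := by
          have h1 := ContinuousMap.norm_coe_le_norm f w
          have h2 := ContinuousMap.norm_coe_le_norm g w
          have h3 := norm_nonneg (f w)
          have h4 := norm_nonneg (g w)
          have h5 := norm_nonneg f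
          have h6 := mul_le_mul h1 h2 h4 h5
          rw [mul_assoc, mul_assoc]
          exact mul_le_mul_of_nonneg_left h6 hK0.le
  have hbdd : ∀ f : C(M, Fin d → ℂ), BddAbove (Set.range fun g : {g : C(M, Fin d → ℂ) // ‖g‖ ≤ 1} =>
      supNorm (polyprod lam ⇑f ⇑(g : C(M, Fin d → ℂ)))) := by
    intro f
    refine ⟨K * ‖f‖, ?_⟩
    rintro x ⟨g, rfl⟩
    simp only
    rw [← pmulC_coe, supNorm_coe]
    calc ‖pmulC lam f ↑g‖ ≤ K * ‖f‖ * ‖(g : C(M, Fin d → ℂ))‖ := hFG f g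
      _ ≤ K * ‖f‖ * 1 := by
          have := g.2
          have h0 : 0 ≤ K * ‖f‖ := by positivity
          nlinarith
      _ = K * ‖f‖ := mul_one _
  have hupper : ∀ f : C(M, Fin d → ℂ), opNorm lam ⇑f ≤ K * ‖f‖ := by
    intro f
    rw [opNorm_def]
    apply ciSup_le
    intro g
    rw [← pmulC_coe, supNorm_coe]
    calc ‖pmulC lam f ↑g‖ ≤ K * ‖f‖ * ‖(g : C(M, Fin d → ℂ))‖ := hFG f g
      _ ≤ K * ‖f‖ * 1 := by
          have := g.2
          have h0 : 0 ≤ K * ‖f‖ := by positivity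
          nlinarith
      _ = K * ‖f‖ := mul_one _
  have hlower : ∀ f : C(M, Fin d → ℂ), ‖f‖ ≤ opNorm lam ⇑f := by
    intro f
    have h1 : ‖(1 : C(M, Fin d → ℂ))‖ ≤ 1 := by
      refine (ContinuousMap.norm_le _ zero_le_one).2 fun x => ?_
      rw [pi_norm_le_iff_of_nonneg zero_le_one]
      intro i
      simp
    have hone : polyprod lam ⇑f ⇑(1 : C(M, Fin d → ℂ)) = ⇑f := by
      funext w
      exact pmul_one lam (w : ℂ) (f w)
    have := le_ciSup (hbdd f) (⟨1, h1⟩ : {g : C(M, Fin d → ℂ) // ‖g‖ ≤ 1})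
    rw [opNorm_def]
    simp only at this
    rwa [hone, supNorm_coe] at this
  have hA : ∀ f k : C(M, Fin d → ℂ), ‖pmulC lam f k‖ ≤ opNorm lam ⇑f * ‖k‖ := by
    intro f k
    rcases eq_or_ne ‖k‖ 0 with hk | hk
    · have hk0 : k = 0 := norm_eq_zero.1 hk
      subst hk0
      have hz : pmulC lam f 0 = 0 := by
        ext w
        have : pmul lam (w : ℂ) (f w) 0 = 0 := pmul_zero_right lam _ _
        exact congrFun this _
      rw [hz]
      simp
    · have hkpos : 0 < ‖k‖ := (norm_nonneg k).lt_of_ne (Ne.symm hk)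
      set k' : C(M, Fin d → ℂ) := ‖k‖⁻¹ • k with hk'def
      have hk'norm : ‖k'‖ = 1 := by
        rw [hk'def]
        have := norm_smul (‖k‖⁻¹) k
        rw [this, norm_inv, norm_norm, inv_mul_cancel₀ hk]
      have hsm : pmulC lam f k' = ‖k‖⁻¹ • pmulC lam f k := by
        ext w j
        show pmul lam (w : ℂ) (f w) (k' w) j = (‖k‖⁻¹ • pmulC lam f k) w j
        have h1 : k' w = ‖k‖⁻¹ • (k w) := rfl
        have h2 : (‖k‖⁻¹ • pmulC lam f k) w = ‖k‖⁻¹ • (pmulC lam f k w) := rfl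
        rw [h1, h2, pmul_smul_right]
        rfl
      have hle := le_ciSup (hbdd f) (⟨k', le_of_eq hk'norm⟩ : {g : C(M, Fin d → ℂ) // ‖g‖ ≤ 1})
      simp only at hle
      rw [← pmulC_coe, supNorm_coe, hsm, norm_smul (‖k‖⁻¹) (pmulC lam f k), norm_inv, norm_norm, ← opNorm_def] at hle
      calc ‖pmulC lam f k‖ = ‖k‖ * (‖k‖⁻¹ * ‖pmulC lam f k‖) := by field_simp
        _ ≤ ‖k‖ * opNorm lam ⇑f := mul_le_mul_of_nonneg_left hle (norm_nonneg k)
        _ = opNorm lam ⇑f * ‖k‖ := mul_comm _ _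
  refine ⟨K, hK0, fun f => ⟨hlower f, hupper f⟩, ?_⟩
  intro f g
  have hcoe : polyprod lam ⇑f ⇑g = ⇑(pmulC lam f g) := rfl
  rw [hcoe, opNorm_def]
  apply ciSup_le
  intro h
  have hassoc : polyprod lam ⇑(pmulC lam f g) ⇑(h : C(M, Fin d → ℂ))
      = ⇑(pmulC lam f (pmulC lam g (h : C(M, Fin d → ℂ)))) := by
    funext w
    show pmul lam (w : ℂ) (pmul lam (w : ℂ) (f w) (g w)) ((h : C(M, Fin d → ℂ)) w) = _
    rw [pmul_assoc lam hinj]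
    rfl
  rw [hassoc, supNorm_coe]
  have hf0 : 0 ≤ opNorm lam ⇑f := le_trans (norm_nonneg f) (hlower f)
  have hg0 : 0 ≤ opNorm lam ⇑g := le_trans (norm_nonneg g) (hlower g)
  calc ‖pmulC lam f (pmulC lam g ↑h)‖
      ≤ opNorm lam ⇑f * ‖pmulC lam g (h : C(M, Fin d → ℂ))‖ := hA f _
    _ ≤ opNorm lam ⇑f * opNorm lam ⇑g := by
        have h1 := hA g (h : C(M, Fin d → ℂ))
        have h2 := h.2
        exact mul_le_mul_of_nonneg_left
          (le_trans h1 (mul_le_of_le_one_right hg0 h2)) hf0
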